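/- Let G be the group presented by generators a, g and the single relation a⁻¹·g·a = g⁻¹·a·g. Then G is not abelian (in particular, G is nontrivial and not isomorphic to ℤ). -/
import Mathlib

/-- The single relator `a⁻¹ · g · a · (g⁻¹ · a · g)⁻¹` for the presentation
`⟨a, g | a⁻¹ g a = g⁻¹ a g⟩`, where `a` is generator `0` and `g` is generator `1`. -/
def KDrels : Set (FreeGroup (Fin 2)) :=
  {(FreeGroup.of 0)⁻¹ * FreeGroup.of 1 * FreeGroup.of 0 *
    ((FreeGroup.of 1)⁻¹ * FreeGroup.of 0 * FreeGroup.of 1)⁻¹}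

def KDf : Fin 2 → Equiv.Perm (Fin 3) := ![Equiv.swap 1 2, Equiv.swap 0 1]

lemma KDf_rel : ∀ r ∈ KDrels, FreeGroup.lift KDf r = 1 := by
  intro r hr
  simp only [KDrels, Set.mem_singleton_iff] at hr
  subst hr
  simp only [map_mul, map_inv, FreeGroup.lift_apply_of, KDf]
  decide

noncomputable def KDhom : PresentedGroup KDrels →* Equiv.Perm (Fin 3) :=
  PresentedGroup.toGroup KDf_rel

theorem stmt_5 : ∃ x y : PresentedGroup KDrels, x * y ≠ y * x := by
  refine ⟨PresentedGroup.of 0, PresentedGroup.of 1, fun h => ?_⟩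
  have := congrArg KDhom h
  simp only [map_mul, KDhom, PresentedGroup.toGroup.of, KDf] at this
  exact absurd this (by decide)
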